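/- Let E be an effect algebra whose induced order satisfies the Ascending Chain Condition, and define the set-valued natural implication a→b := {b+m : m ∈ Max L(a',b')}. Then for all a,b ∈ E: a ≤ b if and only if a→b = {1}. -/
import Mathlib


/-- An effect algebra `(E,+,',0,1)`.  The partial addition is encoded by a total
function `add` together with a definedness predicate `D`; the axioms only
constrain `add` on defined pairs. -/
structure EffectAlgebra (E : Type*) where
  /-- definedness predicate for the partial addition -/
  D : E → E → Prop
  /-- the (partial) addition -/
  add : E → E → E
  /-- the complementation `x ↦ x'` -/
  compl : E → E
  zero : E
  one : E
  /-- (E1) -/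
  comm_def : ∀ {a b : E}, D a b → D b a
  comm : ∀ {a b : E}, D a b → add a b = add b a
  /-- (E2): `(a+b)+c` is defined iff `a+(b+c)` is defined -/
  assoc_def : ∀ a b c : E, (D a b ∧ D (add a b) c) ↔ (D b c ∧ D a (add b c))
  assoc : ∀ a b c : E, D a b → D (add a b) c → add (add a b) c = add a (add b c)
  /-- (E3): `a + b` is defined and equals `1` iff `b = a'` -/
  orth : ∀ a b : E, (D a b ∧ add a b = one) ↔ b = compl a
  /-- (E4) -/
  one_add : ∀ a : E, D one a → a = zero

/-- The induced order of an effect algebra: `a ≤ b` iff `a + c = b` for some `c`. -/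
def EffectAlgebra.le {E : Type*} (A : EffectAlgebra E) (a b : E) : Prop :=
  ∃ c, A.D a c ∧ A.add a c = b

/-- The lower cone `L(a,b) = {x : x ≤ a and x ≤ b}` (w.r.t. the induced order). -/
def EffectAlgebra.lowerCone {E : Type*} (A : EffectAlgebra E) (a b : E) : Set E :=
  {x | A.le x a ∧ A.le x b}

/-- `Max S`: the set of maximal elements of `S` w.r.t. the induced order. -/
def EffectAlgebra.maxOf {E : Type*} (A : EffectAlgebra E) (S : Set E) : Set E :=
  {x | x ∈ S ∧ ∀ y ∈ S, A.le x y → x = y}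

/-- The induced order satisfies the Ascending Chain Condition: there is no
infinite strictly ascending chain. -/
def EffectAlgebra.ACC {E : Type*} (A : EffectAlgebra E) : Prop :=
  ¬ ∃ f : ℕ → E, ∀ n : ℕ, A.le (f n) (f (n + 1)) ∧ f n ≠ f (n + 1)

/-- The set-valued natural implication `a → b := {b + m : m ∈ Max L(a',b')}`
(each such sum is defined since `m ≤ b'`). -/
def EffectAlgebra.impSet {E : Type*} (A : EffectAlgebra E) (a b : E) : Set E :=
  (fun m => A.add b m) '' A.maxOf (A.lowerCone (A.compl a) (A.compl b))

namespace EffectAlgebra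

variable {E : Type*} (A : EffectAlgebra E)

lemma add_compl (a : E) : A.D a (A.compl a) ∧ A.add a (A.compl a) = A.one :=
  (A.orth a (A.compl a)).mpr rfl

lemma compl_compl (a : E) : A.compl (A.compl a) = a := by
  have h := A.add_compl a
  have hd := A.comm_def h.1
  have he : A.add (A.compl a) a = A.one := by rw [A.comm hd, h.2]
  exact ((A.orth (A.compl a) a).mp ⟨hd, he⟩).symm

lemma compl_one : A.compl A.one = A.zero := by
  have h := A.add_compl A.one
  exact A.one_add _ h.1

lemma one_add_zero : A.D A.one A.zero ∧ A.add A.one A.zero = A.one := by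
  have h := A.add_compl A.one
  rwa [A.compl_one] at h

lemma add_zero (a : E) : A.D a A.zero ∧ A.add a A.zero = a := by
  -- first for complements
  have key : ∀ x : E, A.D (A.compl x) A.zero ∧ A.add (A.compl x) A.zero = A.compl x := by
    intro x
    have h1 := A.add_compl x
    have hD1 : A.D (A.add x (A.compl x)) A.zero := by
      rw [h1.2]; exact A.one_add_zero.1
    have h2 := (A.assoc_def x (A.compl x) A.zero).mp ⟨h1.1, hD1⟩
    have h3 := A.assoc x (A.compl x) A.zero h1.1 hD1
    have h4 : A.add x (A.add (A.compl x) A.zero) = A.one := by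
      rw [← h3, h1.2, A.one_add_zero.2]
    have h5 := (A.orth x _).mp ⟨h2.2, h4⟩
    exact ⟨h2.1, h5⟩
  have := key (A.compl a)
  rwa [A.compl_compl] at this

lemma le_refl (a : E) : A.le a a := ⟨A.zero, (A.add_zero a).1, (A.add_zero a).2⟩

lemma zero_le (a : E) : A.le A.zero a := by
  have h := A.add_zero a
  exact ⟨a, A.comm_def h.1, by rw [A.comm (A.comm_def h.1), h.2]⟩

lemma le_compl_le {x y : E} (h : A.le x y) : A.le (A.compl y) (A.compl x) := by
  obtain ⟨c, hd, he⟩ := h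
  have hy := A.add_compl y
  have hD1 : A.D (A.add x c) (A.compl y) := by rw [he]; exact hy.1
  have h2 := (A.assoc_def x c (A.compl y)).mp ⟨hd, hD1⟩
  have h3 := A.assoc x c (A.compl y) hd hD1
  have h4 : A.add x (A.add c (A.compl y)) = A.one := by rw [← h3, he, hy.2]
  have h5 : A.add c (A.compl y) = A.compl x := (A.orth x _).mp ⟨h2.2, h4⟩
  exact ⟨c, A.comm_def h2.1, by rw [A.comm (A.comm_def h2.1), h5]⟩

lemma cancel {a b c : E} (hab : A.D a b) (hac : A.D a c)
    (h : A.add a b = A.add a c) : b = c := by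
  have key : ∀ x : E, A.D a x → A.add a x = A.add a b →
      A.add a (A.compl (A.add a b)) = A.compl x := by
    intro x hax hx
    have h1 := A.add_compl (A.add a b)
    have hDba : A.D x a := A.comm_def hax
    have hD1 : A.D (A.add x a) (A.compl (A.add a b)) := by
      rw [A.comm hDba, hx]; exact h1.1
    have h2 := (A.assoc_def x a (A.compl (A.add a b))).mp ⟨hDba, hD1⟩
    have h3 := A.assoc x a (A.compl (A.add a b)) hDba hD1
    have h4 : A.add x (A.add a (A.compl (A.add a b))) = A.one := by
      rw [← h3, A.comm hDba, hx, h1.2]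
    exact (A.orth x _).mp ⟨h2.2, h4⟩
  have hb := key b hab rfl
  have hc := key c hac h.symm
  have : A.compl b = A.compl c := by rw [← hb, ← hc]
  calc b = A.compl (A.compl b) := (A.compl_compl b).symm
    _ = A.compl (A.compl c) := by rw [this]
    _ = c := A.compl_compl c

lemma add_eq_one_iff {x d : E} (hd : A.D x d) (h : A.add x d = A.zero) : d = A.zero := by
  have hz := A.one_add_zero
  have hD1 : A.D (A.add x d) A.one := by
    rw [h]; exact A.comm_def hz.1
  have h2 := (A.assoc_def x d A.one).mp ⟨hd, hD1⟩
  exact A.one_add _ (A.comm_def h2.1)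

lemma le_antisymm {x y : E} (h1 : A.le x y) (h2 : A.le y x) : x = y := by
  obtain ⟨c, hc, hec⟩ := h1
  obtain ⟨d, hdd, hed⟩ := h2
  have hD1 : A.D (A.add x c) d := by rw [hec]; exact hdd
  have h3 := (A.assoc_def x c d).mp ⟨hc, hD1⟩
  have h4 := A.assoc x c d hc hD1
  have h5 : A.add x (A.add c d) = x := by rw [← h4, hec, hed]
  have h6 : A.add c d = A.zero :=
    A.cancel h3.2 (A.add_zero x).1 (by rw [h5, (A.add_zero x).2])
  have hd0 : d = A.zero := A.add_eq_one_iff h3.1 h6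
  have hc0 : c = A.zero := by
    have : A.add c d = c := by rw [hd0, (A.add_zero c).2]
    rw [← this, h6]
  rw [← hec, hc0, (A.add_zero x).2]

lemma le_of_le_compl {m b : E} (h : A.le m (A.compl b)) : A.D b m := by
  obtain ⟨c, hd, he⟩ := h
  have hb := A.add_compl b
  have hDb : A.D b (A.add m c) := by rw [he]; exact hb.1
  exact ((A.assoc_def b m c).mpr ⟨hd, hDb⟩).1

lemma exists_maximal (hacc : A.ACC) (S : Set E) (hne : S.Nonempty) :
    (A.maxOf S).Nonempty := by
  by_contra hmax
  rw [Set.not_nonempty_iff_eq_empty] at hmax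
  have key : ∀ x ∈ S, ∃ y, y ∈ S ∧ A.le x y ∧ x ≠ y := by
    intro x hx
    by_contra hc
    push_neg at hc
    have : x ∈ A.maxOf S := ⟨hx, hc⟩
    rw [hmax] at this
    exact this
  obtain ⟨x₀, hx₀⟩ := hne
  let g : {x // x ∈ S} → {x // x ∈ S} := fun p =>
    ⟨(key p.1 p.2).choose, (key p.1 p.2).choose_spec.1⟩
  let f : ℕ → {x // x ∈ S} := fun n => g^[n] ⟨x₀, hx₀⟩
  apply hacc
  refine ⟨fun n => (f n).1, fun n => ?_⟩
  dsimp only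
  have hfs : f (n + 1) = g (f n) := Function.iterate_succ_apply' g n _
  have hspec := (key (f n).1 (f n).2).choose_spec
  constructor
  · rw [hfs]; exact hspec.2.1
  · rw [hfs]; exact hspec.2.2

end EffectAlgebra

/-- Theorem 5.2 (i): in an effect algebra satisfying the ACC,
`a ≤ b` iff `a → b = {1}` for the set-valued natural implication. -/
theorem le_iff_impSet_eq_one {E : Type*} (A : EffectAlgebra E) (hacc : A.ACC) (a b : E) :
    A.le a b ↔ A.impSet a b = {A.one} := by
  constructor
  · intro hab
    have hba : A.le (A.compl b) (A.compl a) := A.le_compl_le hab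
    have hbL : A.compl b ∈ A.lowerCone (A.compl a) (A.compl b) :=
      ⟨hba, A.le_refl _⟩
    ext x
    simp only [EffectAlgebra.impSet, Set.mem_image, Set.mem_singleton_iff]
    constructor
    · rintro ⟨m, ⟨hmL, hmax⟩, rfl⟩
      have hm : m = A.compl b := hmax _ hbL hmL.2
      rw [hm, (A.add_compl b).2]
    · rintro rfl
      refine ⟨A.compl b, ⟨hbL, fun y hy hle => A.le_antisymm hle hy.2⟩,
        (A.add_compl b).2⟩
  · intro h
    have hne : (A.lowerCone (A.compl a) (A.compl b)).Nonempty :=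
      ⟨A.zero, A.zero_le _, A.zero_le _⟩
    obtain ⟨m, hm⟩ := A.exists_maximal hacc _ hne
    have hmem : A.add b m ∈ A.impSet a b := ⟨m, hm, rfl⟩
    rw [h, Set.mem_singleton_iff] at hmem
    have hDbm : A.D b m := A.le_of_le_compl hm.1.2
    have hmb : m = A.compl b := (A.orth b m).mp ⟨hDbm, hmem⟩
    have hba : A.le (A.compl b) (A.compl a) := by rw [← hmb]; exact hm.1.1
    have := A.le_compl_le hba
    rwa [A.compl_compl, A.compl_compl] at this
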